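/- Let B be a real p×q matrix, let E and F be symmetric real q×q matrices, set G = E + F, and let G' be a symmetric real p×p matrix. Let A = [[G', B, B],[Bᵀ, 0, G],[Bᵀ, G, 0]] and D = [[G', B, B],[Bᵀ, E, F],[Bᵀ, F, E]], both (p+2q)-square matrices. Then the (p+4q)-square matrices A ⊕ [[E, F],[F, E]] and D ⊕ [[0, G],[G, 0]] are cospectral, i.e., they have the same characteristic polynomial (after transporting along a bijection of their index types). -/

import Mathlib

/-!
Conjugating by the unimodular shear `[[1, 1], [0, 1]]` on `Fin q ⊕ Fin q` (add the third block
row to the second, subtract the second block column from the third) makes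
`[[G', B, B], [C, W, Z], [C, Z, W]]` block lower triangular with diagonal blocks
`[[G', B], [2C, W + Z]]` and `W - Z`. Hence `χ(A) = χ(H) χ(-G)` and `χ(D) = χ(H) χ(E - F)` with
`H = [[G', B], [2Bᵀ, G]]`, while likewise `χ([[E, F], [F, E]]) = χ(G) χ(E - F)` and
`χ([[0, G], [G, 0]]) = χ(G) χ(-G)`; both sides are therefore `χ(H) χ(G) χ(-G) χ(E - F)`.
-/

open Matrix

/-- The matrix `A = [[G', B, B], [Bᵀ, 0, G], [Bᵀ, G, 0]]`, indexed by
`Fin p ⊕ (Fin q ⊕ Fin q)`. -/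
def matA (p q : ℕ) (B : Matrix (Fin p) (Fin q) ℝ) (G : Matrix (Fin q) (Fin q) ℝ)
    (G' : Matrix (Fin p) (Fin p) ℝ) :
    Matrix (Fin p ⊕ (Fin q ⊕ Fin q)) (Fin p ⊕ (Fin q ⊕ Fin q)) ℝ :=
  Matrix.fromBlocks G' (Matrix.fromCols B B) (Matrix.fromRows Bᵀ Bᵀ)
    (Matrix.fromBlocks 0 G G 0)

/-- The matrix `D = [[G', B, B], [Bᵀ, E, F], [Bᵀ, F, E]]` of the generalization of
Construction IV, indexed by `Fin p ⊕ (Fin q ⊕ Fin q)`. -/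
def matD4 (p q : ℕ) (B : Matrix (Fin p) (Fin q) ℝ) (E F : Matrix (Fin q) (Fin q) ℝ)
    (G' : Matrix (Fin p) (Fin p) ℝ) :
    Matrix (Fin p ⊕ (Fin q ⊕ Fin q)) (Fin p ⊕ (Fin q ⊕ Fin q)) ℝ :=
  Matrix.fromBlocks G' (Matrix.fromCols B B) (Matrix.fromRows Bᵀ Bᵀ)
    (Matrix.fromBlocks E F F E)


section Shear

variable {R : Type*} [CommRing R] {l m n : Type*} [Fintype l] [Fintype m] [Fintype n]
  [DecidableEq l] [DecidableEq m] [DecidableEq n]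

theorem charpoly_mul_mul_of_mul_eq_one {P Q : Matrix n n R} (M : Matrix n n R) (h : Q * P = 1) :
    (P * M * Q).charpoly = M.charpoly := by
  rw [charpoly_mul_comm, ← Matrix.mul_assoc, h, Matrix.one_mul]

theorem charpoly_fromBlocks_fromCols_zero (X : Matrix l l R) (Y : Matrix l m R)
    (U : Matrix m l R) (a : Matrix m m R) (V : Matrix n l R) (c : Matrix n m R)
    (b : Matrix n n R) :
    (fromBlocks X (fromCols Y 0) (fromRows U V) (fromBlocks a 0 c b)).charpoly =
      (fromBlocks X Y U a).charpoly * b.charpoly := by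
  have hreindex : reindex (Equiv.sumAssoc l m n).symm (Equiv.sumAssoc l m n).symm
      (fromBlocks X (fromCols Y 0) (fromRows U V) (fromBlocks a 0 c b)) =
        fromBlocks (fromBlocks X Y U a) 0 (fromCols V c) b := by
    ext ((i | i) | i) ((j | j) | j) <;> rfl
  rw [← charpoly_reindex (Equiv.sumAssoc l m n).symm, hreindex, charpoly_fromBlocks_zero₁₂]

theorem fromBlocks_shear_conj (W Z : Matrix n n R) :
    fromBlocks 1 1 0 1 * fromBlocks W Z Z W * fromBlocks 1 (-1) 0 1 =
      fromBlocks (W + Z) 0 Z (W - Z) := by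
  simp only [fromBlocks_multiply]
  congr 1 <;> noncomm_ring

theorem charpoly_fromBlocks_self (W Z : Matrix n n R) :
    (fromBlocks W Z Z W).charpoly = (W + Z).charpoly * (W - Z).charpoly := by
  have hinv : (fromBlocks 1 (-1) 0 1 : Matrix (n ⊕ n) (n ⊕ n) R) * fromBlocks 1 1 0 1 = 1 := by
    simp [fromBlocks_multiply]
  rw [← charpoly_mul_mul_of_mul_eq_one _ hinv, fromBlocks_shear_conj, charpoly_fromBlocks_zero₁₂]

theorem fromBlocks_fromCols_self_shear_conj (X : Matrix l l R) (Y : Matrix l n R)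
    (U : Matrix n l R) (W Z : Matrix n n R) :
    fromBlocks 1 0 0 (fromBlocks 1 1 0 1) *
        fromBlocks X (fromCols Y Y) (fromRows U U) (fromBlocks W Z Z W) *
        fromBlocks 1 0 0 (fromBlocks 1 (-1) 0 1) =
      fromBlocks X (fromCols Y 0) (fromRows (U + U) U) (fromBlocks (W + Z) 0 Z (W - Z)) := by
  simp only [fromBlocks_multiply, Matrix.one_mul, Matrix.zero_mul, Matrix.mul_zero, add_zero,
    zero_add, fromBlocks_mul_fromRows, fromCols_mul_fromBlocks, Matrix.mul_one, Matrix.mul_neg]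
  congr 2 <;> abel

theorem charpoly_fromBlocks_fromCols_self (X : Matrix l l R) (Y : Matrix l n R)
    (U : Matrix n l R) (W Z : Matrix n n R) :
    (fromBlocks X (fromCols Y Y) (fromRows U U) (fromBlocks W Z Z W)).charpoly =
      (fromBlocks X Y (U + U) (W + Z)).charpoly * (W - Z).charpoly := by
  have hinv : (fromBlocks 1 0 0 (fromBlocks 1 (-1) 0 1) : Matrix (l ⊕ (n ⊕ n)) (l ⊕ (n ⊕ n)) R) *
      fromBlocks 1 0 0 (fromBlocks 1 1 0 1) = 1 := by
    simp [fromBlocks_multiply]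
  rw [← charpoly_mul_mul_of_mul_eq_one _ hinv, fromBlocks_fromCols_self_shear_conj,
    charpoly_fromBlocks_fromCols_zero]

end Shear

theorem construction_IV_general_cospectral (p q : ℕ) (B : Matrix (Fin p) (Fin q) ℝ)
    (E F G : Matrix (Fin q) (Fin q) ℝ) (G' : Matrix (Fin p) (Fin p) ℝ)
    (hG : G = E + F) :
    ∃ e : ((Fin p ⊕ (Fin q ⊕ Fin q)) ⊕ (Fin q ⊕ Fin q)) ≃
        ((Fin p ⊕ (Fin q ⊕ Fin q)) ⊕ (Fin q ⊕ Fin q)),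
      (Matrix.fromBlocks (matA p q B G G') 0 0 (Matrix.fromBlocks E F F E)).charpoly =
        ((Matrix.fromBlocks (matD4 p q B E F G') 0 0
            (Matrix.fromBlocks 0 G G 0)).submatrix e e).charpoly := by
  subst hG
  refine ⟨Equiv.refl _, ?_⟩
  rw [Equiv.coe_refl, submatrix_id_id, charpoly_fromBlocks_zero₁₂, charpoly_fromBlocks_zero₁₂,
    matA, matD4, charpoly_fromBlocks_fromCols_self, charpoly_fromBlocks_fromCols_self,
    charpoly_fromBlocks_self, charpoly_fromBlocks_self, zero_add, zero_sub]
  ring
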